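/- Upper bound on the increase in polarization: if s, s' ∈ [0,1]^n with ||s' - s||_0 ≤ k, and z = (I+L)^{-1} s, z' = (I+L)^{-1} s' have polarizations P = Σ_i (z_i - z̄)^2 and P' = Σ_i (z'_i - z̄')^2, then P' ≤ P + 3k. -/

import Mathlib

/-!
Let `A = (I + L)⁻¹`. A discrete minimum principle for `I + L` shows that `A` is entrywise
nonnegative; since `L 1 = 0` and `L` is symmetric, `A` is moreover doubly stochastic. Hence `A`
maps `[0,1]ⁿ` into itself and does not increase the `ℓ¹` norm, so `z, z' ∈ [0,1]ⁿ` and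
`‖z' - z‖₁ ≤ ‖s' - s‖₁ ≤ k`. Finally, the mean minimises the sum of squared deviations, so
`P' ≤ ∑ (z'ᵢ - z̄)² = P + ∑ (z'ᵢ - zᵢ)(z'ᵢ + zᵢ - 2z̄) ≤ P + 2‖z' - z‖₁ ≤ P + 2k`.
-/

open Matrix Finset

variable {ι : Type*} [Fintype ι]

section Stochastic

variable {R : Type*} [Ring R] [LinearOrder R] [IsOrderedRing R] [DecidableEq ι]
  {M : Matrix ι ι R}

lemma mulVec_mem_Icc_of_mem_rowStochastic (hM : M ∈ rowStochastic R ι) {x : ι → R}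
    (hx : ∀ i, x i ∈ Set.Icc 0 1) (i : ι) : (M *ᵥ x) i ∈ Set.Icc 0 1 := by
  have hcompl : 0 ≤ (M *ᵥ (1 - x)) i :=
    nonneg_mulVec_of_mem_rowStochastic hM (fun j => sub_nonneg.2 (hx j).2) i
  rw [mulVec_sub, one_vecMul_of_mem_rowStochastic hM] at hcompl
  exact ⟨nonneg_mulVec_of_mem_rowStochastic hM (fun j => (hx j).1) i,
    sub_nonneg.1 hcompl⟩

lemma sum_abs_mulVec_le_of_mem_colStochastic (hM : M ∈ colStochastic R ι) (x : ι → R) :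
    ∑ i, |(M *ᵥ x) i| ≤ ∑ i, |x i| := by
  calc ∑ i, |(M *ᵥ x) i| ≤ ∑ i, (M *ᵥ fun j => |x j|) i := by
        refine sum_le_sum fun i _ => (abs_sum_le_sum_abs _ _).trans_eq ?_
        simp only [abs_mul, abs_of_nonneg (nonneg_of_mem_colStochastic hM), mulVec, dotProduct]
    _ = ∑ i, |x i| := sum_mulVec_of_mem_colStochastic hM

end Stochastic

section Laplacian

variable [DecidableEq ι] (W : Matrix ι ι ℝ)

def weightedLaplacian : Matrix ι ι ℝ := diagonal (fun i => ∑ j, W i j) - W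

lemma one_add_weightedLaplacian_mulVec_apply (x : ι → ℝ) (i : ι) :
    ((1 + weightedLaplacian W) *ᵥ x) i = x i + ∑ j, W i j * (x i - x j) := by
  rw [weightedLaplacian, add_mulVec, sub_mulVec, one_mulVec]
  simp only [Pi.add_apply, Pi.sub_apply, mulVec_diagonal, mul_sub, sum_sub_distrib, sum_mul]
  rfl

variable {W}

lemma nonneg_of_one_add_weightedLaplacian_mulVec_nonneg (hW : ∀ i j, 0 ≤ W i j)
    {x : ι → ℝ} (hx : ∀ i, 0 ≤ ((1 + weightedLaplacian W) *ᵥ x) i) (i : ι) : 0 ≤ x i := by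
  have : Nonempty ι := ⟨i⟩
  obtain ⟨i₀, hi₀⟩ := Finite.exists_min x
  have hflow : ∑ j, W i₀ j * (x i₀ - x j) ≤ 0 :=
    sum_nonpos fun j _ => mul_nonpos_of_nonneg_of_nonpos (hW i₀ j) (sub_nonpos.2 (hi₀ j))
  have := hx i₀
  rw [one_add_weightedLaplacian_mulVec_apply] at this
  linarith [hi₀ i]

lemma isUnit_one_add_weightedLaplacian (hW : ∀ i j, 0 ≤ W i j) :
    IsUnit (1 + weightedLaplacian W) := by
  have hle : ∀ x y, (1 + weightedLaplacian W) *ᵥ x = (1 + weightedLaplacian W) *ᵥ y → x ≤ y :=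
    fun x y h i => sub_nonneg.1 <| nonneg_of_one_add_weightedLaplacian_mulVec_nonneg hW
      (x := y - x) (fun j => by simp [mulVec_sub, h]) i
  exact mulVec_injective_iff_isUnit.1 fun x y h => le_antisymm (hle x y h) (hle y x h.symm)

lemma inv_one_add_weightedLaplacian_mem_doublyStochastic (hsymm : W.IsSymm)
    (hW : ∀ i j, 0 ≤ W i j) : (1 + weightedLaplacian W)⁻¹ ∈ doublyStochastic ℝ ι := by
  set M := 1 + weightedLaplacian W
  have hdet : IsUnit M.det := (isUnit_iff_isUnit_det M).1 (isUnit_one_add_weightedLaplacian hW)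
  have hM_one : M *ᵥ 1 = 1 := funext fun i => by
    simp [M, one_add_weightedLaplacian_mulVec_apply]
  have hinv_one : M⁻¹ *ᵥ 1 = 1 := by
    conv_lhs => rw [← hM_one, mulVec_mulVec, nonsing_inv_mul _ hdet, one_mulVec]
  have hMsymm : Mᵀ = M := by
    simp only [M, weightedLaplacian, transpose_add, transpose_sub, transpose_one,
      diagonal_transpose, hsymm.eq]
  refine mem_doublyStochastic.2 ⟨fun i j => ?_, hinv_one, ?_⟩
  · have hcol : M *ᵥ (M⁻¹ *ᵥ Pi.single j 1) = Pi.single j 1 := by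
      rw [mulVec_mulVec, mul_nonsing_inv _ hdet, one_mulVec]
    have := nonneg_of_one_add_weightedLaplacian_mulVec_nonneg hW
      (fun k => hcol ▸ Pi.single_nonneg.2 zero_le_one k) i
    simpa [mulVec_single_one] using this
  · rw [← hMsymm, ← transpose_nonsing_inv, vecMul_transpose, hinv_one]

end Laplacian

section Polarization

noncomputable def polarization (x : ι → ℝ) : ℝ :=
  ∑ i, (x i - (1 / (Fintype.card ι : ℝ)) * ∑ j, x j) ^ 2

lemma polarization_le_sum_sq_sub (x : ι → ℝ) (c : ℝ) :
    polarization x ≤ ∑ i, (x i - c) ^ 2 := by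
  rcases isEmpty_or_nonempty ι with hι | hι
  · simp [polarization]
  set N : ℝ := (Fintype.card ι : ℝ)
  set m := 1 / N * ∑ j, x j
  have hN : N ≠ 0 := Nat.cast_ne_zero.2 Fintype.card_ne_zero
  have hsum : ∑ i, x i = N * m := by
    simp only [m]
    field_simp
  have hsplit : ∑ i, (x i - c) ^ 2 = polarization x + N * (m - c) ^ 2 := by
    calc ∑ i, (x i - c) ^ 2 = ∑ i, ((x i - m) ^ 2 + (2 * (m - c) * x i + (c ^ 2 - m ^ 2))) :=
          sum_congr rfl fun i _ => by ring
      _ = polarization x + N * (m - c) ^ 2 := by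
          rw [sum_add_distrib, sum_add_distrib, ← mul_sum, hsum, sum_const, card_univ,
            nsmul_eq_mul]
          simp only [polarization, N, m]
          ring
  rw [hsplit]
  have : 0 ≤ N * (m - c) ^ 2 := by positivity
  linarith

lemma mean_mem_Icc {x : ι → ℝ} (hx : ∀ i, x i ∈ Set.Icc 0 1) :
    (1 / (Fintype.card ι : ℝ)) * ∑ j, x j ∈ Set.Icc 0 1 := by
  refine ⟨mul_nonneg (by positivity) (sum_nonneg fun i _ => (hx i).1), ?_⟩
  calc 1 / (Fintype.card ι : ℝ) * ∑ j, x j ≤ 1 / (Fintype.card ι : ℝ) * Fintype.card ι := by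
        gcongr
        simpa using sum_le_card_nsmul univ x 1 fun i _ => (hx i).2
    _ ≤ 1 := by
        rw [one_div_mul_eq_div]
        exact div_self_le_one _

lemma polarization_le_add_sum_abs_sub {x y : ι → ℝ} (hx : ∀ i, x i ∈ Set.Icc 0 1)
    (hy : ∀ i, y i ∈ Set.Icc 0 1) :
    polarization y ≤ polarization x + 2 * ∑ i, |y i - x i| := by
  set m := 1 / (Fintype.card ι : ℝ) * ∑ j, x j
  have hm := mean_mem_Icc hx
  have hstep : ∀ i, (y i - m) ^ 2 ≤ (x i - m) ^ 2 + 2 * |y i - x i| := fun i => by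
    have hwidth : |y i + x i - 2 * m| ≤ 2 :=
      abs_le.2 ⟨by linarith [(hx i).1, (hy i).1, hm.2], by linarith [(hx i).2, (hy i).2, hm.1]⟩
    have hcross : (y i - x i) * (y i + x i - 2 * m) ≤ |y i - x i| * 2 :=
      calc (y i - x i) * (y i + x i - 2 * m)
          ≤ |y i - x i| * |y i + x i - 2 * m| := (le_abs_self _).trans (abs_mul _ _).le
        _ ≤ |y i - x i| * 2 := by gcongr
    linarith [show (y i - m) ^ 2 = (x i - m) ^ 2 + (y i - x i) * (y i + x i - 2 * m) by ring]
  calc polarization y ≤ ∑ i, (y i - m) ^ 2 := polarization_le_sum_sq_sub y m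
    _ ≤ ∑ i, ((x i - m) ^ 2 + 2 * |y i - x i|) := sum_le_sum fun i _ => hstep i
    _ = polarization x + 2 * ∑ i, |y i - x i| := by rw [sum_add_distrib, mul_sum]; rfl

lemma sum_abs_sub_le_card_filter_ne [DecidableEq ι] {x y : ι → ℝ}
    (hx : ∀ i, x i ∈ Set.Icc 0 1) (hy : ∀ i, y i ∈ Set.Icc 0 1) :
    ∑ i, |y i - x i| ≤ (univ.filter fun i => y i ≠ x i).card := by
  rw [natCast_card_filter]
  refine sum_le_sum fun i _ => ?_
  split_ifs with hne
  · exact abs_sub_le_iff.2 ⟨by linarith [(hy i).2, (hx i).1], by linarith [(hx i).2, (hy i).1]⟩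
  · simp [not_not.1 hne]

end Polarization

theorem polarization_increase_le_general {n k : ℕ} (W : Matrix (Fin n) (Fin n) ℝ)
    (hsymm : W.IsSymm) (hnn : ∀ i j, 0 ≤ W i j)
    (s s' : Fin n → ℝ)
    (hs : ∀ i, s i ∈ Set.Icc (0 : ℝ) 1) (hs' : ∀ i, s' i ∈ Set.Icc (0 : ℝ) 1)
    (hk : (Finset.univ.filter fun a => s' a ≠ s a).card ≤ k)
    (z z' : Fin n → ℝ)
    (hz : z = (1 + (Matrix.diagonal (fun i => ∑ j, W i j) - W))⁻¹ *ᵥ s)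
    (hz' : z' = (1 + (Matrix.diagonal (fun i => ∑ j, W i j) - W))⁻¹ *ᵥ s') :
    ∑ i, (z' i - (1 / (n : ℝ)) * ∑ j, z' j) ^ 2 ≤
      (∑ i, (z i - (1 / (n : ℝ)) * ∑ j, z j) ^ 2) + 3 * (k : ℝ) := by
  obtain ⟨hrow, hcol⟩ := mem_doublyStochastic_iff_mem_rowStochastic_and_mem_colStochastic.1
    (inv_one_add_weightedLaplacian_mem_doublyStochastic hsymm hnn)
  have hz01 : ∀ i, z i ∈ Set.Icc 0 1 := hz ▸ mulVec_mem_Icc_of_mem_rowStochastic hrow hs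
  have hz01' : ∀ i, z' i ∈ Set.Icc 0 1 := hz' ▸ mulVec_mem_Icc_of_mem_rowStochastic hrow hs'
  have hl1 : ∑ i, |z' i - z i| ≤ k :=
    calc ∑ i, |z' i - z i| = ∑ i, |((1 + weightedLaplacian W)⁻¹ *ᵥ (s' - s)) i| := by
          rw [hz, hz', mulVec_sub]; rfl
      _ ≤ ∑ i, |s' i - s i| := sum_abs_mulVec_le_of_mem_colStochastic hcol _
      _ ≤ _ := sum_abs_sub_le_card_filter_ne hs hs'
      _ ≤ k := by exact_mod_cast hk
  have hP := polarization_le_add_sum_abs_sub hz01 hz01'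
  rw [polarization, polarization, Fintype.card_fin] at hP
  linarith [k.cast_nonneg (α := ℝ)]

/-- upper bound on the increase in polarization: P' ≤ P + 3k. -/
theorem polarization_increase_le {n k : ℕ} (W : Matrix (Fin n) (Fin n) ℝ)
    (hsymm : W.IsSymm) (hnn : ∀ i j, 0 ≤ W i j) (hdiag : ∀ i, W i i = 0)
    (s s' : Fin n → ℝ)
    (hs : ∀ i, s i ∈ Set.Icc (0 : ℝ) 1) (hs' : ∀ i, s' i ∈ Set.Icc (0 : ℝ) 1)
    (hk : (Finset.univ.filter fun a => s' a ≠ s a).card ≤ k)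
    (z z' : Fin n → ℝ)
    (hz : z = (1 + (Matrix.diagonal (fun i => ∑ j, W i j) - W))⁻¹ *ᵥ s)
    (hz' : z' = (1 + (Matrix.diagonal (fun i => ∑ j, W i j) - W))⁻¹ *ᵥ s') :
    ∑ i, (z' i - (1 / (n : ℝ)) * ∑ j, z' j) ^ 2 ≤
      (∑ i, (z i - (1 / (n : ℝ)) * ∑ j, z j) ^ 2) + 3 * (k : ℝ) :=
  polarization_increase_le_general W hsymm hnn s s' hs hs' hk z z' hz hz'
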